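/- arXiv:1701.01311 — 4 statements merged into one kernel-verified Lean document; each statement's English description precedes it below -/
import Mathlib

section
/- Let E be a finite set, w : E → ℝ, A B : ℝ, and suppose there exists a nonempty E* ⊆ E with α(E*) ≥ A and β(E*) ≤ B. Then there exists a set T ⊆ E with |T| = |E*| consisting of |T| maximum-weight elements (i.e., w(e) ≥ w(f) for all e ∈ T, f ∈ E \ T) such that α(T) ≥ A and β(T) ≤ B. -/
open Finset

theorem stmt2 {ι : Type*} [DecidableEq ι] (E : Finset ι) (w : ι → ℝ) (A B : ℝ)
    (Es : Finset ι) (hsub : Es ⊆ E) (hne : Es.Nonempty)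
    (hA : A ≤ (∑ e ∈ Es, w e) / Es.card)
    (hB : (∑ e ∈ E \ Es, w e) / Es.card ≤ B) :
    ∃ T ⊆ E, T.card = Es.card ∧
      (∀ e ∈ T, ∀ f ∈ E \ T, w f ≤ w e) ∧
      A ≤ (∑ e ∈ T, w e) / T.card ∧
      (∑ e ∈ E \ T, w e) / T.card ≤ B := by
  set k := Es.card with hk
  have hEsmem : Es ∈ E.powersetCard k := by
    rw [mem_powersetCard]; exact ⟨hsub, rfl⟩
  obtain ⟨T, hTmem, hTmax⟩ :=
    Finset.exists_max_image (E.powersetCard k) (fun s => ∑ e ∈ s, w e) ⟨Es, hEsmem⟩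
  rw [mem_powersetCard] at hTmem
  obtain ⟨hTsub, hTcard⟩ := hTmem
  have hkpos : 0 < (k : ℝ) := by
    have := hne.card_pos; positivity
  have hsum : ∑ e ∈ Es, w e ≤ ∑ e ∈ T, w e := hTmax Es hEsmem
  refine ⟨T, hTsub, hTcard, ?_, ?_, ?_⟩
  · intro e he f hf
    rw [mem_sdiff] at hf
    by_contra hlt
    push_neg at hlt
    set T' := insert f (T.erase e) with hT'
    have hfne : f ∉ T.erase e := fun h => hf.2 (mem_of_mem_erase h)
    have hT'mem : T' ∈ E.powersetCard k := by
      rw [mem_powersetCard]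
      constructor
      · intro x hx
        rcases mem_insert.mp hx with rfl | hx
        · exact hf.1
        · exact hTsub (mem_of_mem_erase hx)
      · rw [card_insert_of_notMem hfne, card_erase_of_mem he, hTcard]
        have : 1 ≤ k := hne.card_pos
        omega
    have hs : ∑ x ∈ T', w x = w f + (∑ x ∈ T, w x - w e) := by
      rw [sum_insert hfne, sum_erase_eq_sub he]
    have := hTmax T' hT'mem
    rw [hs] at this
    linarith
  · rw [hTcard]
    calc A ≤ (∑ e ∈ Es, w e) / k := hA
    _ ≤ (∑ e ∈ T, w e) / k := by gcongr
  · rw [hTcard]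
    have h1 : ∑ e ∈ E \ T, w e = ∑ e ∈ E, w e - ∑ e ∈ T, w e := sum_sdiff_eq_sub hTsub
    have h2 : ∑ e ∈ E \ Es, w e = ∑ e ∈ E, w e - ∑ e ∈ Es, w e := sum_sdiff_eq_sub hsub
    calc (∑ e ∈ E \ T, w e) / k ≤ (∑ e ∈ E \ Es, w e) / k := by
          rw [h1, h2]; gcongr
    _ ≤ B := hB
end

section
/- Let E be a finite set with weight function w : E → ℝ, and suppose w takes only the values 0, 1/2, and 1, with exactly m₁ elements of weight 1 and exactly m₂ elements of weight 1/2. Let s, t, k be positive integers with m₁ = s·t and m₂ ≥ 2k. If E* ⊆ E is nonempty with |E*| < s·t + 2k, then β(E*) > (1/2)(m₂ − 2k) / (s·t + 2k), where β(E*) = (∑_{e ∈ E \ E*} w(e)) / |E*|. -/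
open Finset

theorem stmt3 {ι : Type*} [DecidableEq ι] (E : Finset ι) (w : ι → ℝ)
    (hvals : ∀ e ∈ E, w e = 0 ∨ w e = 1/2 ∨ w e = 1)
    (s t k m₂ : ℕ) (hs : 0 < s) (ht : 0 < t) (hk : 0 < k)
    (hm₁ : (E.filter (fun e => w e = 1)).card = s * t)
    (hm₂ : (E.filter (fun e => w e = 1/2)).card = m₂)
    (hm₂k : 2 * k ≤ m₂)
    (Es : Finset ι) (hsub : Es ⊆ E) (hne : Es.Nonempty)
    (hsmall : Es.card < s * t + 2 * k) :
    (1/2) * ((m₂ : ℝ) - 2 * k) / ((s : ℝ) * t + 2 * k) <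
      (∑ e ∈ E \ Es, w e) / Es.card := by
  have hcard : (0:ℝ) < Es.card := by exact_mod_cast hne.card_pos
  -- generic formula for the sum over a subset of E
  have key : ∀ F : Finset ι, F ⊆ E →
      ∑ e ∈ F, w e = ((F.filter (fun e => w e = 1)).card : ℝ)
        + ((F.filter (fun e => w e = 1/2)).card : ℝ) / 2 := by
    intro F hF
    rw [← Finset.sum_filter_add_sum_filter_not F (fun e => w e = 1)]
    have h1 : ∑ e ∈ F.filter (fun e => w e = 1), w e
        = ((F.filter (fun e => w e = 1)).card : ℝ) := by
      rw [Finset.sum_congr rfl (fun e he => (Finset.mem_filter.mp he).2)]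
      simp
    have hA : (F.filter (fun e => ¬ w e = 1)).filter (fun e => w e = 1/2)
        = F.filter (fun e => w e = 1/2) := by
      ext e
      simp only [Finset.mem_filter]
      constructor
      · rintro ⟨⟨he, _⟩, h⟩; exact ⟨he, h⟩
      · rintro ⟨he, h⟩; refine ⟨⟨he, ?_⟩, h⟩; rw [h]; norm_num
    have h2 : ∑ e ∈ F.filter (fun e => ¬ w e = 1), w e
        = ((F.filter (fun e => w e = 1/2)).card : ℝ) / 2 := by
      rw [← Finset.sum_filter_add_sum_filter_not (F.filter (fun e => ¬ w e = 1))
        (fun e => w e = 1/2)]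
      have hB : ∀ e ∈ ((F.filter (fun e => ¬ w e = 1)).filter (fun e => ¬ w e = 1/2)),
          w e = 0 := by
        intro e he
        simp only [Finset.mem_filter] at he
        rcases hvals e (hF he.1.1) with h | h | h
        · exact h
        · exact absurd h he.2
        · exact absurd h he.1.2
      rw [hA, Finset.sum_congr rfl (fun e he => (Finset.mem_filter.mp he).2),
        Finset.sum_eq_zero hB, Finset.sum_const]
      push_cast
      ring
    rw [h1, h2]
  set a := (Es.filter (fun e => w e = 1)).card with ha
  set b := (Es.filter (fun e => w e = 1/2)).card with hb
  have ha_le : a ≤ s * t := by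
    rw [← hm₁]; exact Finset.card_le_card (Finset.filter_subset_filter _ hsub)
  have hab_le : a + b ≤ Es.card := by
    have hdisj : Disjoint (Es.filter (fun e => w e = 1))
        (Es.filter (fun e => w e = 1/2)) := by
      rw [Finset.disjoint_left]
      intro e h1 h2
      rw [Finset.mem_filter] at h1 h2
      norm_num [h1.2] at h2
    calc a + b = ((Es.filter (fun e => w e = 1)) ∪
          (Es.filter (fun e => w e = 1/2))).card :=
        (Finset.card_union_of_disjoint hdisj).symm
      _ ≤ Es.card := Finset.card_le_card (by
          intro e he
          rcases Finset.mem_union.mp he with h | h <;>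
            exact (Finset.mem_filter.mp h).1)
  have htot : ∑ e ∈ E, w e = (s:ℝ) * t + (m₂:ℝ) / 2 := by
    rw [key E (le_refl E), hm₁, hm₂]; push_cast; ring
  have hEsSum : ∑ e ∈ Es, w e = (a:ℝ) + (b:ℝ) / 2 := key Es hsub
  have hsd : ∑ e ∈ E \ Es, w e = ∑ e ∈ E, w e - ∑ e ∈ Es, w e :=
    Finset.sum_sdiff_eq_sub hsub
  -- real-cast bounds
  have hN : (0:ℝ) < (s:ℝ) * t + 2 * k := by positivity
  have hcN : (Es.card : ℝ) + 1 ≤ (s:ℝ) * t + 2 * k := by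
    have : Es.card + 1 ≤ s * t + 2 * k := hsmall
    exact_mod_cast this
  have hm₂' : (2:ℝ) * k ≤ (m₂:ℝ) := by exact_mod_cast hm₂k
  have ha' : (a:ℝ) ≤ (s:ℝ) * t := by exact_mod_cast ha_le
  have hab' : (a:ℝ) + (b:ℝ) ≤ (Es.card : ℝ) := by exact_mod_cast hab_le
  -- lower bound on outside sum
  have hS : ((m₂:ℝ) - 2 * k + 1) / 2 ≤ ∑ e ∈ E \ Es, w e := by
    rw [hsd, htot, hEsSum]
    have : (b:ℝ) ≤ (s:ℝ) * t + 2 * k - 1 - a := by linarith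
    linarith
  rw [div_lt_div_iff₀ hN hcard]
  have hSpos : ((m₂:ℝ) - 2 * k) / 2 < ∑ e ∈ E \ Es, w e := by linarith
  have h1 : 1/2 * ((m₂:ℝ) - 2 * k) * Es.card
      ≤ 1/2 * ((m₂:ℝ) - 2 * k) * ((s:ℝ) * t + 2 * k) := by
    apply mul_le_mul_of_nonneg_left (by linarith) (by linarith)
  have h2 : 1/2 * ((m₂:ℝ) - 2 * k) * ((s:ℝ) * t + 2 * k)
      < (∑ e ∈ E \ Es, w e) * ((s:ℝ) * t + 2 * k) := by
    apply mul_lt_mul_of_pos_right (by linarith) hN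
  linarith
end

section
/- Let E be a finite set with weight function w taking values in {0, 1/2, 1}, with exactly s·t elements of weight 1 and exactly m₂ ≥ 2k elements of weight 1/2 (s, t, k positive integers). Set A = (s·t + k)/(s·t + 2k) and B = (1/2)(m₂ − 2k)/(s·t + 2k). Then any nonempty E* ⊆ E with α(E*) ≥ A and β(E*) ≤ B satisfies |E*| = s·t + 2k. -/
open Finset

lemma sum_eq_card_filters {ι : Type*} (w : ι → ℝ) (F : Finset ι)
    (h : ∀ e ∈ F, w e = 0 ∨ w e = 1/2 ∨ w e = 1) :
    ∑ e ∈ F, w e = ((F.filter (fun e => w e = 1)).card : ℝ)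
      + ((F.filter (fun e => w e = 1/2)).card : ℝ) * (1/2) := by
  classical
  rw [← Finset.sum_filter_add_sum_filter_not F (fun e => w e = 1)]
  have h1 : ∑ e ∈ F.filter (fun e => w e = 1), w e
      = ((F.filter (fun e => w e = 1)).card : ℝ) := by
    rw [Finset.sum_congr rfl (fun e he => (Finset.mem_filter.mp he).2)]
    simp
  have h2 : (F.filter (fun e => ¬ w e = 1)).filter (fun e => w e = 1/2)
      = F.filter (fun e => w e = 1/2) := by
    ext e
    simp only [Finset.mem_filter]
    constructor
    · rintro ⟨⟨he, -⟩, h2⟩; exact ⟨he, h2⟩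
    · rintro ⟨he, h2⟩; exact ⟨⟨he, by rw [h2]; norm_num⟩, h2⟩
  have h3 : ∑ e ∈ F.filter (fun e => ¬ w e = 1), w e
      = ((F.filter (fun e => w e = 1/2)).card : ℝ) * (1/2) := by
    rw [← Finset.sum_filter_add_sum_filter_not (F.filter (fun e => ¬ w e = 1))
      (fun e => w e = 1/2), h2]
    have h4 : ∑ e ∈ F.filter (fun e => w e = 1/2), w e
        = ((F.filter (fun e => w e = 1/2)).card : ℝ) * (1/2) := by
      rw [Finset.sum_congr rfl (fun e he => (Finset.mem_filter.mp he).2)]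
      simp [mul_comm]
    have h5 : ∑ e ∈ (F.filter (fun e => ¬ w e = 1)).filter (fun e => ¬ w e = 1/2), w e
        = 0 := by
      apply Finset.sum_eq_zero
      intro e he
      simp only [Finset.mem_filter] at he
      rcases h e he.1.1 with h0 | h0 | h0
      · exact h0
      · exact absurd h0 he.2
      · exact absurd h0 he.1.2
    rw [h4, h5]; ring
  rw [h1, h3]

theorem stmt7 {ι : Type*} [DecidableEq ι] (E : Finset ι) (w : ι → ℝ)
    (hvals : ∀ e ∈ E, w e = 0 ∨ w e = 1/2 ∨ w e = 1)
    (s t k m₂ : ℕ) (hs : 0 < s) (ht : 0 < t) (hk : 0 < k)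
    (hm₁ : (E.filter (fun e => w e = 1)).card = s * t)
    (hm₂ : (E.filter (fun e => w e = 1/2)).card = m₂)
    (hm₂k : 2 * k ≤ m₂)
    (Es : Finset ι) (hsub : Es ⊆ E) (hne : Es.Nonempty)
    (hA : ((s : ℝ) * t + k) / ((s : ℝ) * t + 2 * k) ≤ (∑ e ∈ Es, w e) / Es.card)
    (hB : (∑ e ∈ E \ Es, w e) / Es.card ≤ (1/2) * ((m₂ : ℝ) - 2 * k) / ((s : ℝ) * t + 2 * k)) :
    Es.card = s * t + 2 * k := by
  classical
  set a := (Es.filter (fun e => w e = 1)).card with ha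
  set b := (Es.filter (fun e => w e = 1/2)).card with hb
  have hSes : ∑ e ∈ Es, w e = (a : ℝ) + (b : ℝ) * (1/2) :=
    sum_eq_card_filters w Es (fun e he => hvals e (hsub he))
  have hSE : ∑ e ∈ E, w e = ((s : ℝ) * t) + (m₂ : ℝ) * (1/2) := by
    rw [sum_eq_card_filters w E hvals, hm₁, hm₂]; push_cast; ring
  have hsdiff : ∑ e ∈ E \ Es, w e = ∑ e ∈ E, w e - ∑ e ∈ Es, w e := by
    rw [← Finset.sum_sdiff hsub]; ring
  -- a ≤ s*t
  have hast : a ≤ s * t := by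
    rw [← hm₁]
    exact Finset.card_le_card (Finset.filter_subset_filter _ hsub)
  -- a + b ≤ Es.card
  have hab : a + b ≤ Es.card := by
    have hdisj : Disjoint (Es.filter (fun e => w e = 1))
        (Es.filter (fun e => w e = 1/2)) := by
      rw [Finset.disjoint_left]
      intro e h1 h2
      rw [Finset.mem_filter] at h1 h2
      have h3 := h2.2; rw [h1.2] at h3; norm_num at h3
    calc a + b = ((Es.filter (fun e => w e = 1)) ∪ (Es.filter (fun e => w e = 1/2))).card := by
          rw [Finset.card_union_of_disjoint hdisj]
      _ ≤ Es.card := Finset.card_le_card (by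
          intro e he
          rcases Finset.mem_union.mp he with h | h
          · exact (Finset.mem_filter.mp h).1
          · exact (Finset.mem_filter.mp h).1)
  have hn : (0 : ℝ) < Es.card := by
    exact_mod_cast Finset.card_pos.mpr hne
  have hD : (0 : ℝ) < (s : ℝ) * t + 2 * k := by positivity
  set n := (Es.card : ℝ) with hnn
  -- clear denominators
  have hA' : ((s : ℝ) * t + k) * n ≤ (∑ e ∈ Es, w e) * ((s : ℝ) * t + 2 * k) :=
    (div_le_div_iff₀ hD hn).mp hA
  have hB' : (∑ e ∈ E \ Es, w e) * ((s : ℝ) * t + 2 * k)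
      ≤ (1/2) * ((m₂ : ℝ) - 2 * k) * n := (div_le_div_iff₀ hn hD).mp hB
  have haR : (a : ℝ) ≤ (s : ℝ) * t := by exact_mod_cast hast
  have habR : (a : ℝ) + (b : ℝ) ≤ n := by rw [hnn]; exact_mod_cast hab
  have hst : (0 : ℝ) < (s : ℝ) * t := by
    have : (0:ℝ) < (s:ℕ) := by exact_mod_cast hs
    have : (0:ℝ) < (t:ℕ) := by exact_mod_cast ht
    positivity
  have hbpos : (0 : ℝ) ≤ (b : ℝ) := Nat.cast_nonneg b
  -- upper bound : n ≤ s*t + 2*k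
  have hupper : n ≤ (s : ℝ) * t + 2 * k := by
    rw [hSes] at hA'
    nlinarith [hA', haR, habR, hst, hbpos]
  have hlower : (s : ℝ) * t + 2 * k ≤ n := by
    rw [hsdiff, hSE, hSes] at hB'
    have hm : (0 : ℝ) < (m₂ : ℝ) := by
      have : (0:ℕ) < m₂ := lt_of_lt_of_le (by omega) hm₂k
      exact_mod_cast this
    nlinarith [hB', haR, habR, hst, hm]
  have heq : n = (s : ℝ) * t + 2 * k := le_antisymm hupper hlower
  have : (Es.card : ℝ) = ((s * t + 2 * k : ℕ) : ℝ) := by rw [← hnn, heq]; push_cast; ring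
  exact_mod_cast this
end

section
/- Let E be a finite set, w : E → ℝ, and order E as e₁, e₂, …, e_n with w(e₁) ≥ w(e₂) ≥ … ≥ w(e_n). Define T_m = {e₁, …, e_m} for 1 ≤ m ≤ n. Then for A, B : ℝ, there exists a nonempty E* ⊆ E with α(E*) ≥ A and β(E*) ≤ B if and only if there exists m with 1 ≤ m ≤ n such that α(T_m) ≥ A and β(T_m) ≤ B. -/
open Finset

private lemma strictMono_le_val {m : ℕ} (f : Fin m → ℕ) (hf : StrictMono f) :
    ∀ (k : ℕ) (hk : k < m), k ≤ f ⟨k, hk⟩ := by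
  intro k
  induction k with
  | zero => intro _; exact Nat.zero_le _
  | succ j ih =>
    intro hk
    have hj : j < m := by omega
    have h1 : f ⟨j, hj⟩ < f ⟨j + 1, hk⟩ := hf (by simp [Fin.lt_def])
    have h2 := ih hj
    omega

private lemma key_sum {n : ℕ} (v : Fin n → ℝ) (hv : ∀ i j : Fin n, i ≤ j → v j ≤ v i)
    (S : Finset (Fin n)) :
    ∑ i ∈ S, v i ≤ ∑ i ∈ Finset.univ.filter (fun i : Fin n => (i : ℕ) < S.card), v i := by
  set m := S.card with hm
  have hmn : m ≤ n := by
    simpa using S.card_le_univ.trans_eq (by simp)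
  -- prefix set as image of castLE
  have hfilt : Finset.univ.filter (fun i : Fin n => (i : ℕ) < m)
      = Finset.image (Fin.castLE hmn) Finset.univ := by
    ext i
    simp only [mem_filter, mem_univ, true_and, mem_image]
    constructor
    · intro hi; exact ⟨⟨i, hi⟩, rfl⟩
    · rintro ⟨k, rfl⟩; exact k.2
  have hcastinj : Function.Injective (Fin.castLE hmn) := Fin.castLE_injective hmn
  rw [hfilt, Finset.sum_image (fun a _ b _ h => hcastinj h)]
  -- left sum via orderIsoOfFin
  have hiso := S.orderIsoOfFin hm.symm
  have hsum : ∑ i ∈ S, v i = ∑ k : Fin m, v (S.orderEmbOfFin hm.symm k) := by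
    rw [← Finset.sum_attach S (fun i => v i), ← Finset.univ_eq_attach]
    rw [← Equiv.sum_comp (S.orderIsoOfFin hm.symm).toEquiv]
    apply Finset.sum_congr rfl
    intro k _
    simp [Finset.coe_orderIsoOfFin_apply]
  rw [hsum]
  apply Finset.sum_le_sum
  intro k _
  apply hv
  have hsm : StrictMono (fun j : Fin m => ((S.orderEmbOfFin hm.symm j : Fin n) : ℕ)) := by
    intro a b hab
    exact (S.orderEmbOfFin hm.symm).strictMono hab
  have := strictMono_le_val _ hsm k k.2
  simpa [Fin.le_def] using this

theorem stmt14 {ι : Type*} [DecidableEq ι] (E : Finset ι) (w : ι → ℝ)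
    (n : ℕ) (hn : E.card = n)
    (e : Fin n → ι) (hinj : Function.Injective e)
    (himg : Finset.image e Finset.univ = E)
    (hord : ∀ i j : Fin n, i ≤ j → w (e j) ≤ w (e i))
    (T : ℕ → Finset ι)
    (hT : ∀ m : ℕ, T m = Finset.image e (Finset.univ.filter (fun i : Fin n => (i : ℕ) < m)))
    (A B : ℝ) :
    (∃ Es ⊆ E, Es.Nonempty ∧
        A ≤ (∑ x ∈ Es, w x) / Es.card ∧
        (∑ x ∈ E \ Es, w x) / Es.card ≤ B) ↔
    (∃ m : ℕ, 1 ≤ m ∧ m ≤ n ∧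
        A ≤ (∑ x ∈ T m, w x) / (T m).card ∧
        (∑ x ∈ E \ T m, w x) / (T m).card ≤ B) := by
  have hTsub : ∀ m : ℕ, T m ⊆ E := by
    intro m
    rw [hT m, ← himg]
    exact Finset.image_subset_image (Finset.filter_subset _ _)
  have hTcard : ∀ m : ℕ, m ≤ n → (T m).card = m := by
    intro m hm
    rw [hT m, Finset.card_image_of_injective _ hinj]
    have : Finset.univ.filter (fun i : Fin n => (i : ℕ) < m)
        = Finset.image (Fin.castLE hm) Finset.univ := by
      ext i
      simp only [mem_filter, mem_univ, true_and, mem_image]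
      constructor
      · intro hi; exact ⟨⟨i, hi⟩, rfl⟩
      · rintro ⟨k, rfl⟩; exact k.2
    rw [this, Finset.card_image_of_injective _ (Fin.castLE_injective hm)]
    simp
  constructor
  · rintro ⟨Es, hEsub, hne, hA, hB⟩
    set S := Finset.univ.filter (fun i : Fin n => e i ∈ Es) with hS
    have hEsS : Es = Finset.image e S := by
      ext x
      simp only [hS, mem_image, mem_filter, mem_univ, true_and]
      constructor
      · intro hx
        have hxE : x ∈ E := hEsub hx
        rw [← himg] at hxE
        obtain ⟨i, _, rfl⟩ := Finset.mem_image.mp hxE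
        exact ⟨i, hx, rfl⟩
      · rintro ⟨i, hi, rfl⟩; exact hi
    set m := S.card with hm
    have hcardEs : Es.card = m := by
      rw [hEsS, Finset.card_image_of_injective _ hinj]
    have hmn : m ≤ n := by
      rw [← hcardEs]
      exact hn ▸ Finset.card_le_card hEsub
    have hm1 : 1 ≤ m := by
      rw [← hcardEs]
      exact Finset.card_pos.mpr hne
    have hTm : (T m).card = m := hTcard m hmn
    have hsumEs : ∑ x ∈ Es, w x = ∑ i ∈ S, w (e i) := by
      rw [hEsS, Finset.sum_image (fun a _ b _ h => hinj h)]
    have hsumT : ∑ x ∈ T m, w x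
        = ∑ i ∈ Finset.univ.filter (fun i : Fin n => (i : ℕ) < m), w (e i) := by
      rw [hT m, Finset.sum_image (fun a _ b _ h => hinj h)]
    have hle : ∑ x ∈ Es, w x ≤ ∑ x ∈ T m, w x := by
      rw [hsumEs, hsumT]
      exact key_sum (fun i => w (e i)) hord S
    have hmpos : (0 : ℝ) < (m : ℝ) := by exact_mod_cast hm1
    refine ⟨m, hm1, hmn, ?_, ?_⟩
    · rw [hTm]
      refine hA.trans ?_
      rw [hcardEs]
      exact (div_le_div_iff_of_pos_right hmpos).mpr hle
    · rw [hTm]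
      have hsub : ∑ x ∈ E \ T m, w x ≤ ∑ x ∈ E \ Es, w x := by
        rw [Finset.sum_sdiff_eq_sub (hTsub m), Finset.sum_sdiff_eq_sub hEsub]
        linarith
      refine le_trans ?_ (hcardEs ▸ hB)
      exact (div_le_div_iff_of_pos_right hmpos).mpr hsub
  · rintro ⟨m, hm1, hmn, hA, hB⟩
    refine ⟨T m, hTsub m, ?_, hA, hB⟩
    rw [hT m]
    refine Finset.Nonempty.image ?_ e
    refine ⟨⟨0, lt_of_lt_of_le hm1 hmn⟩, ?_⟩
    simpa using (show 0 < m by omega)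
end
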